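/- Let $H$ be a self-adjoint matrix with orthonormal eigenbasis $\{\phi_k\}$ and eigenvalues $\lambda_k$, let $G$ be any matrix, and let $J$ be a set of eigenvalue indices. Then $\tfrac12\sum_{j\in J}(z-\lambda_j)^2\big(\langle[G^*,[H,G]]\phi_j,\phi_j\rangle+\langle[G,[H,G^*]]\phi_j,\phi_j\rangle\big)-\sum_{j\in J}(z-\lambda_j)\big(\|[H,G]\phi_j\|^2+\|[H,G^*]\phi_j\|^2\big)=\sum_{j\in J}\sum_{k\notin J}(z-\lambda_j)(z-\lambda_k)(\lambda_k-\lambda_j)\big(|\langle G\phi_j,\phi_k\rangle|^2+|\langle G^*\phi_j,\phi_k\rangle|^2\big)$, i.e., the terms with $k\in J$ drop out by antisymmetry. -/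

import Mathlib

open scoped InnerProductSpace

/-- Commutator of two endomorphisms. -/
def opComm {R : Type*} [Ring R] (A B : R) : R := A * B - B * A

/-!
In the eigenbasis, `⟪b k, [H, A] b j⟫ = (λ_k - λ_j) ⟪b k, A b j⟫`. Hence, by Parseval, both
double-commutator expectations equal `∑ k, (λ_k - λ_j) w j k` and the two squared norms add up to
`∑ k, (λ_k - λ_j)² w j k`, where `w j k = |⟪G b j, b k⟫|² + |⟪G* b j, b k⟫|²` is symmetric in
`j, k`. The `j`-th summand of the left-hand side is therefore
`∑ k, (z - λ_j) (z - λ_k) (λ_k - λ_j) w j k`, which is antisymmetric in `(j, k)`, so the terms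
with `j, k ∈ J` cancel in pairs.
-/

open Finset LinearMap

theorem Finset.sum_sum_eq_sum_sum_compl_of_antisymm {ι R : Type*} [Fintype ι] [DecidableEq ι]
    [Ring R] [NoZeroDivisors R] [CharZero R] (f : ι → ι → R) (hf : ∀ j k, f j k = -f k j)
    (J : Finset ι) : ∑ j ∈ J, ∑ k, f j k = ∑ j ∈ J, ∑ k ∈ Jᶜ, f j k := by
  have hJJ : ∑ j ∈ J, ∑ k ∈ J, f j k = 0 := by
    refine add_self_eq_zero.mp (add_eq_zero_iff_eq_neg.mpr ?_)
    conv_lhs => rw [sum_comm]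
    simp only [← sum_neg_distrib]
    exact sum_congr rfl fun _ _ => sum_congr rfl fun _ _ => hf _ _
  simp only [← sum_add_sum_compl J, sum_add_distrib, hJJ, zero_add]

variable {𝕜 E ι : Type*} [RCLike 𝕜] [NormedAddCommGroup E] [InnerProductSpace 𝕜 E]

theorem opComm_apply (A B : E →ₗ[𝕜] E) (x : E) : opComm A B x = A (B x) - B (A x) := rfl

theorem LinearMap.IsSymmetric.inner_opComm_apply_eigenvector {H : E →ₗ[𝕜] E}
    (hH : H.IsSymmetric) (A : E →ₗ[𝕜] E) {u v : E} {μ ν : ℝ}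
    (hu : H u = (μ : 𝕜) • u) (hv : H v = (ν : 𝕜) • v) :
    ⟪u, opComm H A v⟫_𝕜 = ((μ - ν : ℝ) : 𝕜) * ⟪u, A v⟫_𝕜 := by
  rw [opComm_apply, inner_sub_right, ← hH u, hu, hv, map_smul, inner_smul_left,
    inner_smul_right, RCLike.conj_ofReal]
  push_cast
  ring

theorem OrthonormalBasis.inner_eq_sum_of_inner_eq_mul [Fintype ι]
    (b : OrthonormalBasis ι 𝕜 E) (c : ι → ℝ) {x y : E}
    (h : ∀ k, ⟪b k, x⟫_𝕜 = (c k : 𝕜) * ⟪b k, y⟫_𝕜) :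
    ⟪x, y⟫_𝕜 = ((∑ k, c k * ‖⟪y, b k⟫_𝕜‖ ^ 2 : ℝ) : 𝕜) := by
  rw [← b.sum_inner_mul_inner]
  push_cast
  refine sum_congr rfl fun k _ => ?_
  rw [← inner_conj_symm x, h, map_mul, RCLike.conj_ofReal, mul_assoc, RCLike.conj_mul,
    norm_inner_symm]

theorem OrthonormalBasis.norm_sq_eq_sum_of_inner_eq_mul [Fintype ι]
    (b : OrthonormalBasis ι 𝕜 E) (c : ι → ℝ) {x y : E}
    (h : ∀ k, ⟪b k, x⟫_𝕜 = (c k : 𝕜) * ⟪b k, y⟫_𝕜) :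
    ‖x‖ ^ 2 = ∑ k, c k ^ 2 * ‖⟪y, b k⟫_𝕜‖ ^ 2 := by
  rw [← b.sum_sq_norm_inner_right]
  refine sum_congr rfl fun k _ => ?_
  rw [h, norm_mul, RCLike.norm_ofReal, mul_pow, sq_abs, norm_inner_symm]

section FiniteDimensional

variable [FiniteDimensional 𝕜 E]

-- `[H, A]* = -[H, A*]` because `H` is symmetric.
theorem LinearMap.IsSymmetric.inner_opComm_adjoint_opComm_apply_self {H : E →ₗ[𝕜] E}
    (hH : H.IsSymmetric) (A : E →ₗ[𝕜] E) (x : E) :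
    ⟪opComm (adjoint A) (opComm H A) x, x⟫_𝕜
      = ⟪opComm H A x, A x⟫_𝕜 + ⟪adjoint A x, opComm H (adjoint A) x⟫_𝕜 := by
  have h₁ : ⟪H (A (adjoint A x)), x⟫_𝕜 = ⟪adjoint A x, adjoint A (H x)⟫_𝕜 := by
    rw [hH, adjoint_inner_right]
  have h₂ : ⟪A (H (adjoint A x)), x⟫_𝕜 = ⟪adjoint A x, H (adjoint A x)⟫_𝕜 := by
    rw [← adjoint_inner_right, hH]
  simp only [opComm_apply, inner_sub_left, inner_sub_right, adjoint_inner_left, h₁, h₂]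
  ring

theorem norm_inner_sq_add_norm_inner_adjoint_sq_comm (A : E →ₗ[𝕜] E) (u v : E) :
    ‖⟪A u, v⟫_𝕜‖ ^ 2 + ‖⟪adjoint A u, v⟫_𝕜‖ ^ 2
      = ‖⟪A v, u⟫_𝕜‖ ^ 2 + ‖⟪adjoint A v, u⟫_𝕜‖ ^ 2 := by
  rw [adjoint_inner_left, adjoint_inner_left, norm_inner_symm u, norm_inner_symm v, add_comm]

end FiniteDimensional

section Eigenbasis

variable [Fintype ι] {H : E →ₗ[𝕜] E} (b : OrthonormalBasis ι 𝕜 E) {lam : ι → ℝ}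

theorem norm_opComm_apply_eigenbasis_sq (hH : H.IsSymmetric)
    (heig : ∀ k, H (b k) = (lam k : 𝕜) • b k) (A : E →ₗ[𝕜] E) (j : ι) :
    ‖opComm H A (b j)‖ ^ 2 = ∑ k, (lam k - lam j) ^ 2 * ‖⟪A (b j), b k⟫_𝕜‖ ^ 2 :=
  b.norm_sq_eq_sum_of_inner_eq_mul _ fun k =>
    hH.inner_opComm_apply_eigenvector A (heig k) (heig j)

variable [FiniteDimensional 𝕜 E]

theorem norm_opComm_apply_eigenbasis_sq_add_adjoint (hH : H.IsSymmetric)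
    (heig : ∀ k, H (b k) = (lam k : 𝕜) • b k) (A : E →ₗ[𝕜] E) (j : ι) :
    ‖opComm H A (b j)‖ ^ 2 + ‖opComm H (adjoint A) (b j)‖ ^ 2
      = ∑ k, (lam k - lam j) ^ 2 *
          (‖⟪A (b j), b k⟫_𝕜‖ ^ 2 + ‖⟪adjoint A (b j), b k⟫_𝕜‖ ^ 2) := by
  rw [norm_opComm_apply_eigenbasis_sq b hH heig, norm_opComm_apply_eigenbasis_sq b hH heig,
    ← sum_add_distrib]
  simp only [mul_add]

theorem inner_opComm_adjoint_opComm_apply_eigenbasis (hH : H.IsSymmetric)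
    (heig : ∀ k, H (b k) = (lam k : 𝕜) • b k) (A : E →ₗ[𝕜] E) (j : ι) :
    ⟪opComm (adjoint A) (opComm H A) (b j), b j⟫_𝕜
      = ((∑ k, (lam k - lam j) *
          (‖⟪A (b j), b k⟫_𝕜‖ ^ 2 + ‖⟪adjoint A (b j), b k⟫_𝕜‖ ^ 2) : ℝ) : 𝕜) := by
  rw [hH.inner_opComm_adjoint_opComm_apply_self, ← inner_conj_symm (adjoint A (b j)),
    b.inner_eq_sum_of_inner_eq_mul _ fun k =>
      hH.inner_opComm_apply_eigenvector A (heig k) (heig j),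
    b.inner_eq_sum_of_inner_eq_mul _ fun k =>
      hH.inner_opComm_apply_eigenvector (adjoint A) (heig k) (heig j),
    RCLike.conj_ofReal, ← RCLike.ofReal_add, ← sum_add_distrib]
  simp only [mul_add]

theorem inner_opComm_opComm_adjoint_apply_eigenbasis (hH : H.IsSymmetric)
    (heig : ∀ k, H (b k) = (lam k : 𝕜) • b k) (A : E →ₗ[𝕜] E) (j : ι) :
    ⟪opComm A (opComm H (adjoint A)) (b j), b j⟫_𝕜
      = ⟪opComm (adjoint A) (opComm H A) (b j), b j⟫_𝕜 := by
  simpa only [adjoint_adjoint, add_comm,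
      ← inner_opComm_adjoint_opComm_apply_eigenbasis b hH heig]
    using inner_opComm_adjoint_opComm_apply_eigenbasis b hH heig (adjoint A) j

end Eigenbasis

/-- sum rule over a subset `J` of eigenvalue indices: the terms with
`k ∈ J` drop out by antisymmetry, leaving a double sum over `j ∈ J`, `k ∉ J`. -/
theorem stmt_2 (n : ℕ)
    (H G : EuclideanSpace ℂ (Fin n) →ₗ[ℂ] EuclideanSpace ℂ (Fin n))
    (hH : LinearMap.adjoint H = H)
    (b : OrthonormalBasis (Fin n) ℂ (EuclideanSpace ℂ (Fin n)))
    (lam : Fin n → ℝ)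
    (heig : ∀ k, H (b k) = (lam k : ℂ) • b k)
    (z : ℝ) (J : Finset (Fin n)) :
    (1/2 : ℂ) * ∑ j ∈ J, ((z : ℂ) - lam j)^2 *
        (⟪opComm (LinearMap.adjoint G) (opComm H G) (b j), b j⟫_ℂ
          + ⟪opComm G (opComm H (LinearMap.adjoint G)) (b j), b j⟫_ℂ)
      - ∑ j ∈ J, ((z : ℂ) - lam j) *
        ((‖opComm H G (b j)‖^2 + ‖opComm H (LinearMap.adjoint G) (b j)‖^2 : ℝ) : ℂ)
    = ∑ j ∈ J, ∑ k ∈ Jᶜ, (((z - lam j) * (z - lam k) * (lam k - lam j) *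
        (‖⟪G (b j), b k⟫_ℂ‖^2 + ‖⟪LinearMap.adjoint G (b j), b k⟫_ℂ‖^2) : ℝ) : ℂ) := by
  have hHs : H.IsSymmetric := (isSymmetric_iff_isSelfAdjoint H).mpr hH
  -- The `RCLike` casts produced by the general lemmas must become `Complex.ofReal` for `ring`.
  simp only [inner_opComm_opComm_adjoint_apply_eigenbasis b hHs heig,
    inner_opComm_adjoint_opComm_apply_eigenbasis b hHs heig,
    norm_opComm_apply_eigenbasis_sq_add_adjoint b hHs heig, RCLike.ofReal_eq_complex_ofReal]
  rw [← sum_sum_eq_sum_sum_compl_of_antisymm _ (fun j k => ?antisymm) J, mul_sum,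
    ← sum_sub_distrib]
  · refine sum_congr rfl fun j _ => ?_
    push_cast
    simp only [← two_mul, mul_sum, ← sum_sub_distrib]
    refine sum_congr rfl fun k _ => ?_
    ring
  · rw [norm_inner_sq_add_norm_inner_adjoint_sq_comm G (b j) (b k)]
    push_cast
    ring
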